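/- Let β ∈ (2,3) and γ ≥ 0 with β − 1 − γ > 1. Suppose the bootstrap probability ρ ∈ (0,1] satisfies ρ = o(ν^{−1/(β−1−γ)}) for some ν = ν(n) → ∞. Suppose the number of initially active neighbours of a vertex of weight w is Poisson with mean at most Cρw (C a constant), and the number of vertices of weight ≥ w in the starting region is Poisson with mean at most C'ν w^{1−β+γ} for all w ≥ w_min. Then the expected number of vertices in the starting region having at least k ≥ 2 initially active neighbours is at most O(ν ρ^{β−1−γ}) = o(1). -/

import Mathlib

/-!
If a vertex has `Poisson(λ)` active neighbours with `λ ≤ x`, it has at least `k` of them with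
probability at most `min(x, 1)^k`. Since `min(x, 1)^k ≤ ∫₀¹ k t^(k-1) 1{t ≤ x} dt`, summing over
the vertices with `x = Cρw` bounds the expectation by `∫₀¹ k t^(k-1) N(t) dt`, where `N(t)` counts
the vertices with `Cρw ≥ t`. The weight tail gives `N(t) ≤ C'ν(Cρ)^α t^(-α)` with `α = β-1-γ`, and
as `α < 2 ≤ k` the integral converges at `0`, giving `O(νρ^α)`. Finally `ρ = o(ν^(-1/α))` is the
statement `νρ^α = (ρν^(1/α))^α → 0`.
-/

open ProbabilityTheory MeasureTheory Filter Set Finset Function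
open scoped NNReal Nat Topology

lemma poissonMeasure_singleton_add_le (r : ℝ≥0) (i k : ℕ) :
    poissonMeasure r {i + k} ≤ ENNReal.ofReal (r ^ k / k !) * poissonMeasure r {i} := by
  rw [poissonMeasure_singleton, poissonMeasure_singleton, ← ENNReal.ofReal_mul (by positivity)]
  refine ENNReal.ofReal_le_ofReal ?_
  have hfact : (i ! * k ! : ℝ) ≤ (i + k)! := by
    exact_mod_cast Nat.le_of_dvd (Nat.factorial_pos _)
      (Nat.factorial_mul_factorial_dvd_factorial_add i k)
  calc Real.exp (-r) * r ^ (i + k) / (i + k)!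
      ≤ Real.exp (-r) * r ^ (i + k) / (i ! * k !) := by gcongr
    _ = r ^ k / k ! * (Real.exp (-r) * r ^ i / i !) := by ring

lemma poissonMeasure_Ici_le (r : ℝ≥0) (k : ℕ) :
    poissonMeasure r (Ici k) ≤ ENNReal.ofReal (r ^ k / k !) := by
  have hIci : Ici k = ⋃ i : ℕ, {i + k} := by
    ext j
    simp only [Set.mem_Ici, mem_iUnion, mem_singleton_iff]
    exact ⟨fun h => ⟨j - k, by omega⟩, by rintro ⟨i, rfl⟩; omega⟩
  have hdisj (f : ℕ → ℕ) (hf : f.Injective) : Pairwise (Disjoint on fun i => ({f i} : Set ℕ)) :=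
    fun i j hij => disjoint_singleton.2 (hf.ne hij)
  calc poissonMeasure r (Ici k)
      = ∑' i, poissonMeasure r {i + k} := by
        rw [hIci, measure_iUnion (hdisj _ (add_left_injective k)) fun _ => .of_discrete]
    _ ≤ ∑' i, ENNReal.ofReal (r ^ k / k !) * poissonMeasure r {i} :=
        ENNReal.tsum_le_tsum fun i => poissonMeasure_singleton_add_le r i k
    _ = ENNReal.ofReal (r ^ k / k !) * ∑' i, poissonMeasure r {i} := ENNReal.tsum_mul_left
    _ ≤ ENNReal.ofReal (r ^ k / k !) * 1 := by
        gcongr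
        exact (measure_iUnion (hdisj id injective_id) fun _ => .of_discrete).symm.trans_le
          prob_le_one
    _ = ENNReal.ofReal (r ^ k / k !) := mul_one _

lemma toReal_poissonMeasure_Ici_le_min_pow {r x : ℝ} (hr : 0 ≤ r) (hrx : r ≤ x) (k : ℕ) :
    (poissonMeasure r.toNNReal (Ici k)).toReal ≤ min x 1 ^ k := by
  rcases le_total x 1 with hx | hx
  · calc (poissonMeasure r.toNNReal (Ici k)).toReal ≤ r ^ k / k ! :=
          ENNReal.toReal_le_of_le_ofReal (by positivity)
            (by simpa [Real.coe_toNNReal r hr] using poissonMeasure_Ici_le r.toNNReal k)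
      _ ≤ r ^ k := div_le_self (by positivity) (by exact_mod_cast k.factorial_pos)
      _ ≤ min x 1 ^ k := by rw [min_eq_left hx]; gcongr
  · rw [min_eq_right hx, one_pow]
    exact ENNReal.toReal_le_of_le_ofReal zero_le_one (by simpa using prob_le_one)

lemma antitone_ite_le (x : ℝ) : Antitone fun t : ℝ => if t ≤ x then (1 : ℝ) else 0 := by
  intro s t hst
  by_cases ht : t ≤ x
  · simp [ht, hst.trans ht]
  · by_cases hs : s ≤ x <;> simp [ht, hs]

lemma intervalIntegrable_pow_mul_ite_le (k : ℕ) (x a b : ℝ) :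
    IntervalIntegrable (fun t : ℝ => k * t ^ (k - 1) * (if t ≤ x then (1 : ℝ) else 0))
      volume a b :=
  (antitone_ite_le x).intervalIntegrable.continuousOn_mul (by fun_prop)

lemma min_pow_le_integral {k : ℕ} (hk : 0 < k) {x : ℝ} (hx : 0 ≤ x) :
    min x 1 ^ k ≤ ∫ t in (0 : ℝ)..1, k * t ^ (k - 1) * (if t ≤ x then 1 else 0) := by
  set m := min x 1
  have hm0 : 0 ≤ m := le_min hx zero_le_one
  calc m ^ k = ∫ t in (0 : ℝ)..m, k * t ^ (k - 1) := by
        rw [intervalIntegral.integral_eq_sub_of_hasDerivAt (fun t _ => hasDerivAt_pow k t)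
          ((continuous_const.mul (continuous_pow _)).intervalIntegrable _ _),
          zero_pow hk.ne', sub_zero]
    _ = ∫ t in (0 : ℝ)..m, k * t ^ (k - 1) * (if t ≤ x then 1 else 0) := by
        refine intervalIntegral.integral_congr fun t ht => ?_
        rw [uIcc_of_le hm0] at ht
        simp [ht.2.trans (min_le_left x 1)]
    _ ≤ (∫ t in (0 : ℝ)..m, k * t ^ (k - 1) * (if t ≤ x then 1 else 0)) +
          ∫ t in m..1, k * t ^ (k - 1) * (if t ≤ x then 1 else 0) := by
        refine le_add_of_nonneg_right
          (intervalIntegral.integral_nonneg (min_le_right x 1) fun t ht => ?_)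
        have : 0 ≤ t := hm0.trans ht.1
        positivity
    _ = ∫ t in (0 : ℝ)..1, k * t ^ (k - 1) * (if t ≤ x then 1 else 0) :=
        intervalIntegral.integral_add_adjacent_intervals
          (intervalIntegrable_pow_mul_ite_le k x _ _) (intervalIntegrable_pow_mul_ite_le k x _ _)

lemma sum_min_pow_le_of_card_filter_le {ι : Type*} (T : Finset ι) (x : ι → ℝ)
    (hx : ∀ v ∈ T, 0 ≤ x v) {k : ℕ} (hk : 0 < k) {α B : ℝ} (hα : α < k)
    (htail : ∀ t ∈ Ioo (0 : ℝ) 1, (#(T.filter (t ≤ x ·)) : ℝ) ≤ B * t ^ (-α)) :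
    ∑ v ∈ T, min (x v) 1 ^ k ≤ k / (k - α) * B := by
  set N : ℝ → ℝ := fun t => #(T.filter (t ≤ x ·))
  have hN : N = fun t => ∑ v ∈ T, if t ≤ x v then 1 else 0 := by
    ext t
    simp [N, Finset.sum_boole]
  have hNanti : Antitone N := fun s t hst =>
    Nat.cast_le.2 (card_le_card (monotone_filter_right _ fun _ _ => hst.trans))
  have hkα : (-1 : ℝ) < k - 1 - α := by linarith
  calc ∑ v ∈ T, min (x v) 1 ^ k
      ≤ ∑ v ∈ T, ∫ t in (0 : ℝ)..1, k * t ^ (k - 1) * (if t ≤ x v then 1 else 0) :=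
        sum_le_sum fun v hv => min_pow_le_integral hk (hx v hv)
    _ = ∫ t in (0 : ℝ)..1, k * t ^ (k - 1) * N t := by
        rw [← intervalIntegral.integral_finsetSum fun v _ =>
          intervalIntegrable_pow_mul_ite_le k (x v) 0 1]
        simp only [hN, mul_sum]
    _ ≤ ∫ t in (0 : ℝ)..1, k * B * t ^ ((k : ℝ) - 1 - α) := by
        refine intervalIntegral.integral_mono_on_of_le_Ioo zero_le_one
          (hNanti.intervalIntegrable.continuousOn_mul (by fun_prop))
          ((intervalIntegral.intervalIntegrable_rpow' hkα).const_mul _) fun t ht => ?_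
        have hk1 : ((k - 1 : ℕ) : ℝ) = k - 1 := by rw [Nat.cast_sub hk, Nat.cast_one]
        rw [mul_assoc, mul_assoc]
        refine mul_le_mul_of_nonneg_left ?_ (Nat.cast_nonneg k)
        calc t ^ (k - 1) * N t ≤ t ^ (k - 1) * (B * t ^ (-α)) :=
              mul_le_mul_of_nonneg_left (htail t ht) (pow_nonneg ht.1.le _)
          _ = B * t ^ ((k : ℝ) - 1 - α) := by
              rw [sub_eq_add_neg _ α, Real.rpow_add ht.1, ← hk1, Real.rpow_natCast]
              ring
    _ = k / (k - α) * B := by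
        rw [intervalIntegral.integral_const_mul, integral_rpow (Or.inl hkα),
          show (k : ℝ) - 1 - α + 1 = k - α by ring, Real.zero_rpow (by linarith), Real.one_rpow]
        field_simp
        ring

lemma card_filter_le_rpow_of_forall_le_weight {ι : Type*} {T : Finset ι} {w : ι → ℝ}
    {wmin A α : ℝ}
    (hwmin : 0 < wmin) (hα : 0 ≤ α) (hw : ∀ v ∈ T, wmin ≤ w v)
    (htail : ∀ s, wmin ≤ s → (#(T.filter (s ≤ w ·)) : ℝ) ≤ A * s ^ (-α))
    {s : ℝ} (hs : 0 < s) : (#(T.filter (s ≤ w ·)) : ℝ) ≤ A * s ^ (-α) := by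
  rcases le_total wmin s with hle | hle
  · exact htail s hle
  have hA : 0 ≤ A := nonneg_of_mul_nonneg_left ((Nat.cast_nonneg _).trans (htail wmin le_rfl))
    (Real.rpow_pos_of_pos hwmin _)
  calc (#(T.filter (s ≤ w ·)) : ℝ) ≤ #(T.filter (wmin ≤ w ·)) := by
        rw [filter_true_of_mem hw]
        exact_mod_cast card_filter_le _ _
    _ ≤ A * wmin ^ (-α) := htail wmin le_rfl
    _ ≤ A * s ^ (-α) :=
        mul_le_mul_of_nonneg_left (Real.rpow_le_rpow_of_nonpos hs hle (neg_nonpos.2 hα)) hA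

lemma card_filter_le_const_mul_rpow {ι : Type*} {T : Finset ι} {w : ι → ℝ} {A α c : ℝ}
    (hc : 0 < c) (htail : ∀ s, 0 < s → (#(T.filter (s ≤ w ·)) : ℝ) ≤ A * s ^ (-α))
    {t : ℝ} (ht : 0 < t) : (#(T.filter (t ≤ c * w ·)) : ℝ) ≤ A * c ^ α * t ^ (-α) := by
  have hfilter : T.filter (t ≤ c * w ·) = T.filter (t / c ≤ w ·) :=
    filter_congr fun v _ => by rw [div_le_iff₀' hc]
  calc (#(T.filter (t ≤ c * w ·)) : ℝ) ≤ A * (t / c) ^ (-α) :=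
        hfilter ▸ htail _ (div_pos ht hc)
    _ = A * c ^ α * t ^ (-α) := by
        rw [Real.div_rpow ht.le hc.le, Real.rpow_neg hc.le, div_inv_eq_mul]
        ring

lemma tendsto_mul_rpow_of_tendsto_mul_rpow_inv {κ : Type*} {l : Filter κ} {ν ρ : κ → ℝ} {α : ℝ}
    (hα : 0 < α) (hν : ∀ n, 0 ≤ ν n) (hρ : ∀ n, 0 ≤ ρ n)
    (h : Tendsto (fun n => ρ n * ν n ^ (1 / α)) l (𝓝 0)) :
    Tendsto (fun n => ν n * ρ n ^ α) l (𝓝 0) := by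
  have hpow := ((Real.continuousAt_rpow_const 0 α (Or.inr hα.le)).tendsto.comp h)
  rw [Real.zero_rpow hα.ne'] at hpow
  refine hpow.congr fun n => ?_
  simp only [comp_apply]
  rw [Real.mul_rpow (hρ n) (Real.rpow_nonneg (hν n) _), ← Real.rpow_mul (hν n),
    one_div_mul_cancel hα.ne', Real.rpow_one, mul_comm]

lemma sum_toReal_poissonMeasure_Ici_le {ι : Type*} {T : Finset ι} {w r : ι → ℝ}
    {wmin A α c : ℝ} {k : ℕ} (hwmin : 0 < wmin) (hα : 0 ≤ α) (hαk : α < k) (hc : 0 < c)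
    (hw : ∀ v ∈ T, wmin ≤ w v) (hr : ∀ v ∈ T, 0 ≤ r v ∧ r v ≤ c * w v)
    (htail : ∀ s, wmin ≤ s → (#(T.filter (s ≤ w ·)) : ℝ) ≤ A * s ^ (-α)) :
    ∑ v ∈ T, (poissonMeasure (r v).toNNReal (Ici k)).toReal ≤ k / (k - α) * (A * c ^ α) := by
  have hscaled (t : ℝ) (ht : t ∈ Ioo (0 : ℝ) 1) :
      (#(T.filter (t ≤ c * w ·)) : ℝ) ≤ A * c ^ α * t ^ (-α) :=
    card_filter_le_const_mul_rpow hc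
      (fun s hs => card_filter_le_rpow_of_forall_le_weight hwmin hα hw htail hs) ht.1
  calc ∑ v ∈ T, (poissonMeasure (r v).toNNReal (Ici k)).toReal
      ≤ ∑ v ∈ T, min (c * w v) 1 ^ k := sum_le_sum fun v hv =>
        toReal_poissonMeasure_Ici_le_min_pow (hr v hv).1 (hr v hv).2 k
    _ ≤ k / (k - α) * (A * c ^ α) :=
        sum_min_pow_le_of_card_filter_le T _ (fun v hv => (hr v hv).1.trans (hr v hv).2)
          (Nat.cast_pos.1 (hα.trans_lt hαk)) hαk hscaled

theorem subcritical_expected_activation_general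
    {ι : Type*}
    (β γ : ℝ) (hβ' : β < 3) (hγ : 0 ≤ γ) (hβγ : 1 < β - 1 - γ)
    (k : ℕ) (hk : 2 ≤ k)
    (wmin C C' : ℝ) (hwmin : 0 < wmin) (hC : 0 < C) (hC' : 0 < C')
    (ν ρ : ℕ → ℝ)
    (hρ : ∀ n, ρ n ∈ Set.Ioc (0:ℝ) 1)
    (hρsmall : Tendsto (fun n => ρ n * (ν n) ^ (1/(β-1-γ))) atTop (nhds 0))
    (V : ℕ → Finset ι) (wt : ℕ → ι → ℝ) (lam : ℕ → ι → ℝ)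
    (hwt : ∀ n, ∀ v ∈ V n, wmin ≤ wt n v)
    (hlam : ∀ n, ∀ v ∈ V n, 0 ≤ lam n v ∧ lam n v ≤ C * ρ n * wt n v)
    (htail : ∀ n, ∀ w : ℝ, wmin ≤ w →
      (((V n).filter (fun v => w ≤ wt n v)).card : ℝ) ≤ C' * ν n * w ^ (1-β+γ)) :
    ∃ C'' > 0,
      (∀ n, (∑ v ∈ V n, (poissonMeasure (lam n v).toNNReal {j : ℕ | k ≤ j}).toReal)
          ≤ C'' * ν n * (ρ n) ^ (β-1-γ)) ∧
      Tendsto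
        (fun n => ∑ v ∈ V n,
          (poissonMeasure (lam n v).toNNReal {j : ℕ | k ≤ j}).toReal)
        atTop (nhds 0) := by
  set α := β - 1 - γ
  have hαk : α < k := by
    have : (2 : ℝ) ≤ k := by exact_mod_cast hk
    linarith
  rw [show 1 - β + γ = -α by ring] at htail
  have hν : ∀ n, 0 ≤ ν n := fun n => nonneg_of_mul_nonneg_right
    (nonneg_of_mul_nonneg_left ((Nat.cast_nonneg _).trans (htail n wmin le_rfl))
      (Real.rpow_pos_of_pos hwmin _)) hC'
  set C'' := k / (k - α) * C' * C ^ α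
  have hbound (n : ℕ) : (∑ v ∈ V n, (poissonMeasure (lam n v).toNNReal {j : ℕ | k ≤ j}).toReal)
      ≤ C'' * ν n * ρ n ^ α := by
    have hCρ : 0 < C * ρ n := mul_pos hC (hρ n).1
    refine (sum_toReal_poissonMeasure_Ici_le hwmin (by linarith) hαk hCρ (hwt n)
      (hlam n) (htail n)).trans_eq ?_
    rw [Real.mul_rpow hC.le (hρ n).1.le]
    ring
  have hC''_pos : 0 < C'' := by
    have := sub_pos.2 hαk
    have := Real.rpow_pos_of_pos hC α
    positivity
  refine ⟨C'', hC''_pos, hbound, ?_⟩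
  have hlim := (tendsto_mul_rpow_of_tendsto_mul_rpow_inv (by linarith) hν (fun n => (hρ n).1.le)
    hρsmall).const_mul C''
  rw [mul_zero] at hlim
  refine tendsto_of_tendsto_of_tendsto_of_le_of_le tendsto_const_nhds (hlim.congr fun n => ?_)
    (fun n => sum_nonneg fun v _ => ENNReal.toReal_nonneg) hbound
  ring

/-- **Core computation of the subcritical regime.** Let `β ∈ (2,3)`, `γ ≥ 0` with
`β − 1 − γ > 1`, and let `ρ = ρ(n) ∈ (0,1]` satisfy `ρ = o(ν^{−1/(β−1−γ)})` with
`ν = ν(n) → ∞`. Suppose that the number of initially active neighbours of a vertex `v`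
of weight `wt v` is Poisson with mean `lam v ≤ C·ρ·wt v`, and that the number of
vertices of weight `≥ w` in the starting region is at most `C'·ν·w^{1−β+γ}` for all
`w ≥ w_min`. Then the expected number of vertices in the starting region having at
least `k ≥ 2` initially active neighbours is `O(ν·ρ^{β−1−γ}) = o(1)`. -/
theorem subcritical_expected_activation
    {ι : Type*} [DecidableEq ι]
    (β γ : ℝ) (hβ : 2 < β) (hβ' : β < 3) (hγ : 0 ≤ γ) (hβγ : 1 < β - 1 - γ)
    (k : ℕ) (hk : 2 ≤ k)
    (wmin C C' : ℝ) (hwmin : 0 < wmin) (hC : 0 < C) (hC' : 0 < C')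
    (ν ρ : ℕ → ℝ)
    (hν : Tendsto ν atTop atTop)
    (hρ : ∀ n, ρ n ∈ Set.Ioc (0:ℝ) 1)
    (hρsmall : Tendsto (fun n => ρ n * (ν n) ^ (1/(β-1-γ))) atTop (nhds 0))
    (V : ℕ → Finset ι) (wt : ℕ → ι → ℝ) (lam : ℕ → ι → ℝ)
    (hwt : ∀ n, ∀ v ∈ V n, wmin ≤ wt n v)
    (hlam : ∀ n, ∀ v ∈ V n, 0 ≤ lam n v ∧ lam n v ≤ C * ρ n * wt n v)
    (htail : ∀ n, ∀ w : ℝ, wmin ≤ w →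
      (((V n).filter (fun v => w ≤ wt n v)).card : ℝ) ≤ C' * ν n * w ^ (1-β+γ)) :
    ∃ C'' > 0,
      (∀ n, (∑ v ∈ V n, (poissonMeasure (lam n v).toNNReal {j : ℕ | k ≤ j}).toReal)
          ≤ C'' * ν n * (ρ n) ^ (β-1-γ)) ∧
      Tendsto
        (fun n => ∑ v ∈ V n,
          (poissonMeasure (lam n v).toNNReal {j : ℕ | k ≤ j}).toReal)
        atTop (nhds 0) :=
  subcritical_expected_activation_general β γ hβ' hγ hβγ k hk wmin C C' hwmin hC hC' ν ρ hρ hρsmall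
    V wt lam hwt hlam htail
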